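/- With U as above and α = β = 1/√2, under unitarity constraints Re⟨e₀|e₂⟩ + Re⟨e₁|e₃⟩ = 0 and Im⟨e₀|e₂⟩ + Im⟨e₁|e₃⟩ = 0, it holds that p_{a,ā} − p_{b,b̄} = (1/2)(Im⟨e₀|e₁⟩ − Re⟨e₀|e₁⟩ + Im⟨e₂|e₃⟩ − Re⟨e₂|e₃⟩) − Re⟨e₁|e₂⟩. -/

import Mathlib

open scoped ComplexInnerProductSpace

/-- The embedding x ↦ |0⟩⊗x of the ancilla into qubit ⊗ ancilla (modeled as E × E
with the L² inner product, first component = |0⟩ slot, second = |1⟩ slot). -/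
noncomputable def emb0 {E : Type*} [NormedAddCommGroup E] [InnerProductSpace ℂ E]
    (x : E) : WithLp 2 (E × E) := (WithLp.equiv 2 (E × E)).symm (x, 0)

/-- The embedding x ↦ |1⟩⊗x of the ancilla into qubit ⊗ ancilla. -/
noncomputable def emb1 {E : Type*} [NormedAddCommGroup E] [InnerProductSpace ℂ E]
    (x : E) : WithLp 2 (E × E) := (WithLp.equiv 2 (E × E)).symm (0, x)

/-! Both flip probabilities are `¼‖a + v‖²` with `a = e₀ - e₃`, where `v = e₂ - e₁` in the
X basis and `v = i(e₁ + e₂)` in the Y basis. Expanding the squares, the `‖a‖²` terms cancel,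
`‖e₂ - e₁‖² - ‖e₁ + e₂‖² = -4 Re⟨e₁|e₂⟩`, and the cross terms leave
`½(Im⟨e₀|e₁⟩ - Re⟨e₀|e₁⟩ + Im⟨e₂|e₃⟩ - Re⟨e₂|e₃⟩)` plus
`½(Re⟨e₀|e₂⟩ + Re⟨e₁|e₃⟩ + Im⟨e₀|e₂⟩ + Im⟨e₁|e₃⟩)`, which vanishes by unitarity. -/

open scoped ComplexConjugate

theorem norm_add_I_smul_sq {E : Type*} [NormedAddCommGroup E] [InnerProductSpace ℂ E]
    (x y : E) : ‖x + Complex.I • y‖ ^ 2 = ‖x‖ ^ 2 - 2 * ⟪x, y⟫.im + ‖y‖ ^ 2 := by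
  rw [norm_add_sq (𝕜 := ℂ), inner_smul_right, norm_smul, Complex.norm_I, one_mul,
    RCLike.re_to_complex, Complex.I_mul_re]
  ring

theorem paa_minus_pbb_general {E : Type*} [NormedAddCommGroup E]
    [InnerProductSpace ℂ E]
    (e0 e1 e2 e3 : E)
    (paa pbb : ℝ)
    (hpaa : paa = (1/4) * ‖e0 + e2 - e1 - e3‖^2)
    (hpbb : pbb = (1/4) * ‖e0 + Complex.I • e1 + Complex.I • e2 - e3‖^2)
    (hre : ⟪e0, e2⟫.re + ⟪e1, e3⟫.re = 0)
    (him : ⟪e0, e2⟫.im + ⟪e1, e3⟫.im = 0) :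
    paa - pbb = (1/2) * (⟪e0, e1⟫.im - ⟪e0, e1⟫.re + ⟪e2, e3⟫.im - ⟪e2, e3⟫.re)
      - ⟪e1, e2⟫.re := by
  have hxBasis : e0 + e2 - e1 - e3 = (e0 - e3) + (e2 - e1) := by abel
  have hyBasis :
      e0 + Complex.I • e1 + Complex.I • e2 - e3 = (e0 - e3) + Complex.I • (e1 + e2) := by
    rw [smul_add]; abel
  rw [hpaa, hpbb, hxBasis, hyBasis, norm_add_sq (𝕜 := ℂ), norm_add_I_smul_sq,
    norm_sub_sq (𝕜 := ℂ) e2 e1, norm_add_sq (𝕜 := ℂ) e1 e2]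
  have h12 : ⟪e2, e1⟫ = conj ⟪e1, e2⟫ := (inner_conj_symm (𝕜 := ℂ) e2 e1).symm
  have h23 : ⟪e3, e2⟫ = conj ⟪e2, e3⟫ := (inner_conj_symm (𝕜 := ℂ) e3 e2).symm
  have h13 : ⟪e3, e1⟫ = conj ⟪e1, e3⟫ := (inner_conj_symm (𝕜 := ℂ) e3 e1).symm
  simp only [RCLike.re_to_complex, inner_sub_left, inner_sub_right, inner_add_right,
    h12, h23, h13, Complex.sub_re, Complex.sub_im, Complex.add_im, Complex.conj_re, Complex.conj_im]
  linarith

/-- for α = β = 1/√2, under the unitarity constraints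
Re⟨e₀|e₂⟩+Re⟨e₁|e₃⟩ = 0 and Im⟨e₀|e₂⟩+Im⟨e₁|e₃⟩ = 0,
p_{a,ā} − p_{b,b̄} = ½(Im⟨e₀|e₁⟩−Re⟨e₀|e₁⟩+Im⟨e₂|e₃⟩−Re⟨e₂|e₃⟩) − Re⟨e₁|e₂⟩. -/
theorem paa_minus_pbb {E : Type*} [NormedAddCommGroup E]
    [InnerProductSpace ℂ E] [FiniteDimensional ℂ E]
    (U : WithLp 2 (E × E) ≃ₗᵢ[ℂ] WithLp 2 (E × E))
    (χ e0 e1 e2 e3 : E) (hχ : ‖χ‖ = 1)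
    (hU0 : U (emb0 χ) = emb0 e0 + emb1 e1)
    (hU1 : U (emb1 χ) = emb0 e2 + emb1 e3)
    (paa pbb : ℝ)
    (hpaa : paa = (1/4) * ‖e0 + e2 - e1 - e3‖^2)
    (hpbb : pbb = (1/4) * ‖e0 + Complex.I • e1 + Complex.I • e2 - e3‖^2)
    (hre : ⟪e0, e2⟫.re + ⟪e1, e3⟫.re = 0)
    (him : ⟪e0, e2⟫.im + ⟪e1, e3⟫.im = 0) :
    paa - pbb = (1/2) * (⟪e0, e1⟫.im - ⟪e0, e1⟫.re + ⟪e2, e3⟫.im - ⟪e2, e3⟫.re)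
      - ⟪e1, e2⟫.re :=
  paa_minus_pbb_general e0 e1 e2 e3 paa pbb hpaa hpbb hre him
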